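/- arXiv:2506.23892 — 3 statements merged into one kernel-verified Lean document; each statement's English description precedes it below -/
import Mathlib

section
/- Restricted posterior reconstruction: with W_s, V_s ∈ ℝ^{d×s} satisfying V_sᵀ W_s = I_s, Γ_pr = W_s (V_sᵀ Γ_pr V_s) W_sᵀ (i.e., W_s V_sᵀ projects onto Ran(Γ_pr)), define Ĝ = G W_s, Γ̂_pr = V_sᵀ Γ_pr V_s, and Γ̂_pos = Γ̂_pr − Γ̂_pr Ĝᵀ(Ĝ Γ̂_pr Ĝᵀ + Γ_obs)⁻¹ Ĝ Γ̂_pr. Then W_s Γ̂_pos W_sᵀ = Γ_pos, where Γ_pos = Γ_pr − Γ_pr Gᵀ(Γ_obs + G Γ_pr Gᵀ)⁻¹ G Γ_pr. -/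
open Matrix

/-!
The posterior covariance `Γ - Γ Hᵀ (H Γ Hᵀ + R)⁻¹ H Γ` is built from `Γ` only through products
`Γ Hᵀ`, `H Γ`, `H Γ Hᵀ`. Hence conjugating the posterior of `(Γ̂, G W)` by `W` gives the posterior
of `(W Γ̂ Wᵀ, G)`, a purely formal identity needing no invertibility. The two projector identities
give `Γ_pr = W (Vᵀ Γ_pr V) Wᵀ`.
-/

namespace Matrix

variable {α : Type*} {n s m : Type*} [Fintype n] [Fintype s] [Fintype m] [DecidableEq m]

theorem conj_restrict_eq_self [NonUnitalSemiring α] {Γ : Matrix n n α} {W V : Matrix n s α}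
    (h₁ : W * Vᵀ * Γ = Γ) (h₂ : Γ * V * Wᵀ = Γ) :
    W * (Vᵀ * Γ * V) * Wᵀ = Γ := by
  calc W * (Vᵀ * Γ * V) * Wᵀ = W * Vᵀ * Γ * V * Wᵀ := by simp only [Matrix.mul_assoc]
    _ = Γ := by rw [h₁, h₂]

variable [CommRing α]

noncomputable def posteriorCov (Γ : Matrix n n α) (H : Matrix m n α) (R : Matrix m m α) :
    Matrix n n α :=
  Γ - Γ * Hᵀ * (H * Γ * Hᵀ + R)⁻¹ * H * Γ

theorem conj_posteriorCov (Γ : Matrix s s α) (G : Matrix m n α) (W : Matrix n s α)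
    (R : Matrix m m α) :
    W * posteriorCov Γ (G * W) R * Wᵀ = posteriorCov (W * Γ * Wᵀ) G R := by
  simp only [posteriorCov, transpose_mul, Matrix.mul_sub, Matrix.sub_mul, Matrix.mul_assoc]

end Matrix

theorem restricted_posterior_reconstruction_general
    {d s m : ℕ} (G : Matrix (Fin m) (Fin d) ℝ)
    (Γpr : Matrix (Fin d) (Fin d) ℝ) (Γobs : Matrix (Fin m) (Fin m) ℝ)
    (Ws Vs : Matrix (Fin d) (Fin s) ℝ)
    (hproj₁ : Ws * Vsᵀ * Γpr = Γpr) (hproj₂ : Γpr * Vs * Wsᵀ = Γpr) :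
    Ws * ((Vsᵀ * Γpr * Vs) -
        (Vsᵀ * Γpr * Vs) * (G * Ws)ᵀ *
          ((G * Ws) * (Vsᵀ * Γpr * Vs) * (G * Ws)ᵀ + Γobs)⁻¹ *
          (G * Ws) * (Vsᵀ * Γpr * Vs)) * Wsᵀ =
      Γpr - Γpr * Gᵀ * (Γobs + G * Γpr * Gᵀ)⁻¹ * G * Γpr := by
  calc _ = Ws * posteriorCov (Vsᵀ * Γpr * Vs) (G * Ws) Γobs * Wsᵀ := rfl
    _ = posteriorCov Γpr G Γobs := by
      rw [conj_posteriorCov, conj_restrict_eq_self hproj₁ hproj₂]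
    _ = _ := by rw [posteriorCov, add_comm (G * Γpr * Gᵀ)]

/-- Restricted posterior reconstruction: with `W_s, V_s ∈ ℝ^{d×s}` satisfying
`V_sᵀ W_s = I_s` and with the oblique projector `W_s V_sᵀ` acting as the identity on
`Ran(Γ_pr)` (so that `W_s V_sᵀ Γ_pr = Γ_pr` and `Γ_pr V_s W_sᵀ = Γ_pr`), define
`Ĝ = G W_s`, `Γ̂_pr = V_sᵀ Γ_pr V_s` and
`Γ̂_pos = Γ̂_pr − Γ̂_pr Ĝᵀ (Ĝ Γ̂_pr Ĝᵀ + Γ_obs)⁻¹ Ĝ Γ̂_pr`. Then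
`W_s Γ̂_pos W_sᵀ = Γ_pos`, where
`Γ_pos = Γ_pr − Γ_pr Gᵀ (Γ_obs + G Γ_pr Gᵀ)⁻¹ G Γ_pr`. -/
theorem restricted_posterior_reconstruction
    {d s m : ℕ} (G : Matrix (Fin m) (Fin d) ℝ)
    (Γpr : Matrix (Fin d) (Fin d) ℝ) (Γobs : Matrix (Fin m) (Fin m) ℝ)
    (Ws Vs : Matrix (Fin d) (Fin s) ℝ)
    (hpr : Γpr.PosSemidef) (hobs : Γobs.PosDef)
    (hVW : Vsᵀ * Ws = 1)
    (hproj₁ : Ws * Vsᵀ * Γpr = Γpr) (hproj₂ : Γpr * Vs * Wsᵀ = Γpr) :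
    Ws * ((Vsᵀ * Γpr * Vs) -
        (Vsᵀ * Γpr * Vs) * (G * Ws)ᵀ *
          ((G * Ws) * (Vsᵀ * Γpr * Vs) * (G * Ws)ᵀ + Γobs)⁻¹ *
          (G * Ws) * (Vsᵀ * Γpr * Vs)) * Wsᵀ =
      Γpr - Γpr * Gᵀ * (Γobs + G * Γpr * Gᵀ)⁻¹ * G * Γpr :=
  restricted_posterior_reconstruction_general G Γpr Γobs Ws Vs hproj₁ hproj₂
end

section
/- If A is stable and P solves the Lyapunov equation A P + P Aᵀ = −L Lᵀ, then the rank of P equals the rank of the reachability matrix [L, AL, A²L, ..., A^{d−1}L]; in particular Ran(P) contains Ran(L). -/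
/-!
Let `W = ⋂ₖ ker (Aᵏ L)ᵀ`, the orthogonal complement of the reachable subspace `Σₖ Ran (Aᵏ L)`.
Testing the Lyapunov equation against `x ∈ ker P` gives `‖Lᵀ x‖² = -xᵀ(AP + PAᵀ)x = 0` and
then `P Aᵀ x = 0`, so `ker P` is an `Aᵀ`-invariant subspace of `ker Lᵀ`, hence `ker P ⊆ W`.
Conversely `W` is `Aᵀ`-invariant and on it the equation reads `A P = P (-Aᵀ)`, so for the
characteristic polynomial `χ` of `-Aᵀ` we get `χ(A) P = P χ(-Aᵀ) = 0` on `W`. Stability makes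
the spectra of `A` and `-Aᵀ` disjoint, so `χ(A)` is invertible and `P` vanishes on `W`.
Hence `ker P = W`; as `P` is symmetric, taking orthogonal complements gives
`Ran P = Σₖ Ran (Aᵏ L)`, and Cayley–Hamilton truncates the sum at `k < d`.
-/

open Matrix Polynomial

theorem Submodule.orthogonal_iInf {𝕜 E ι : Type*} [RCLike 𝕜] [NormedAddCommGroup E]
    [InnerProductSpace 𝕜 E] [FiniteDimensional 𝕜 E] (K : ι → Submodule 𝕜 E) :
    (⨅ i, K i)ᗮ = ⨆ i, (K i)ᗮ := by
  rw [← Submodule.orthogonal_orthogonal (⨆ i, (K i)ᗮ), ← Submodule.iInf_orthogonal]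
  simp only [Submodule.orthogonal_orthogonal]

namespace Matrix

section Euclidean

variable {𝕜 m n : Type*} [RCLike 𝕜] [Fintype n]

theorem toEuclideanLin_eq_comp [DecidableEq n] (M : Matrix m n 𝕜) :
    toEuclideanLin M = ((EuclideanSpace.equiv m 𝕜).symm : (m → 𝕜) →ₗ[𝕜] EuclideanSpace 𝕜 m) ∘ₗ
      M.mulVecLin ∘ₗ (EuclideanSpace.equiv n 𝕜 : EuclideanSpace 𝕜 n →ₗ[𝕜] n → 𝕜) :=
  rfl

theorem range_toEuclideanLin [DecidableEq n] (M : Matrix m n 𝕜) :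
    LinearMap.range (toEuclideanLin M) = (LinearMap.range M.mulVecLin).comap
      (EuclideanSpace.equiv m 𝕜 : EuclideanSpace 𝕜 m →ₗ[𝕜] m → 𝕜) := by
  rw [toEuclideanLin_eq_comp, ← LinearMap.comp_assoc, LinearEquiv.range_comp,
    LinearMap.range_comp, Submodule.map_equiv_eq_comap_symm]
  rfl

theorem ker_toEuclideanLin [DecidableEq n] (M : Matrix m n 𝕜) :
    LinearMap.ker (toEuclideanLin M) = (LinearMap.ker M.mulVecLin).comap
      (EuclideanSpace.equiv n 𝕜 : EuclideanSpace 𝕜 n →ₗ[𝕜] n → 𝕜) := by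
  rw [toEuclideanLin_eq_comp, LinearEquiv.ker_comp, LinearMap.ker_comp]

theorem range_toEuclideanLin_eq_orthogonal_ker [Fintype m] [DecidableEq m] [DecidableEq n]
    (M : Matrix m n 𝕜) :
    LinearMap.range (toEuclideanLin M) = (LinearMap.ker (toEuclideanLin Mᴴ))ᗮ := by
  rw [LinearMap.orthogonal_ker, ← toEuclideanLin_conjTranspose_eq_adjoint,
    conjTranspose_conjTranspose]

theorem range_mulVecLin_eq_iSup_of_ker_eq_iInf [Fintype m] {ι : Type*} {P : Matrix n n 𝕜}
    (hP : P.IsHermitian) {T : ι → Matrix n m 𝕜}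
    (h : LinearMap.ker P.mulVecLin = ⨅ i, LinearMap.ker (T i)ᴴ.mulVecLin) :
    LinearMap.range P.mulVecLin = ⨆ i, LinearMap.range (T i).mulVecLin := by
  classical
  set e : EuclideanSpace 𝕜 n →ₗ[𝕜] n → 𝕜 := (EuclideanSpace.equiv n 𝕜 :)
  have he : Function.Surjective e := (EuclideanSpace.equiv n 𝕜).surjective
  have hcomap : (LinearMap.range P.mulVecLin).comap e =
      ⨆ i, (LinearMap.range (T i).mulVecLin).comap e := by
    rw [← range_toEuclideanLin, range_toEuclideanLin_eq_orthogonal_ker, hP.eq,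
      ker_toEuclideanLin, h, Submodule.comap_iInf, Submodule.orthogonal_iInf]
    simp only [← ker_toEuclideanLin, ← range_toEuclideanLin_eq_orthogonal_ker,
      range_toEuclideanLin]
    rfl
  rw [← Submodule.map_comap_eq_of_surjective he (LinearMap.range P.mulVecLin), hcomap,
    Submodule.map_iSup_comap_of_surjective he]

end Euclidean

section Intertwining

variable {R : Type*} [CommRing R] {m n : Type*} [Fintype m] [Fintype n] [DecidableEq m]
  [DecidableEq n] {A : Matrix m m R} {B : Matrix n n R} {P : Matrix m n R}
  {W : Submodule R (n → R)}

theorem pow_mulVec_mulVec_of_intertwines (hW : ∀ w ∈ W, B *ᵥ w ∈ W)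
    (h : ∀ w ∈ W, A *ᵥ (P *ᵥ w) = P *ᵥ (B *ᵥ w)) (k : ℕ) :
    ∀ w ∈ W, A ^ k *ᵥ (P *ᵥ w) = P *ᵥ (B ^ k *ᵥ w) := by
  induction k with
  | zero => simp
  | succ k ih =>
    intro w hw
    rw [pow_succ, pow_succ, ← mulVec_mulVec, ← mulVec_mulVec, h w hw, ih _ (hW w hw)]

theorem aeval_mulVec_mulVec_of_intertwines (hW : ∀ w ∈ W, B *ᵥ w ∈ W)
    (h : ∀ w ∈ W, A *ᵥ (P *ᵥ w) = P *ᵥ (B *ᵥ w)) (p : R[X]) {w : n → R} (hw : w ∈ W) :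
    aeval A p *ᵥ (P *ᵥ w) = P *ᵥ (aeval B p *ᵥ w) := by
  induction p using Polynomial.induction_on' with
  | add p q hp hq => simp only [map_add, add_mulVec, mulVec_add, hp, hq]
  | monomial k c =>
    simp only [aeval_monomial, ← Algebra.smul_def, smul_mulVec, mulVec_smul,
      pow_mulVec_mulVec_of_intertwines hW h k w hw]

theorem mulVec_eq_zero_of_intertwines (hW : ∀ w ∈ W, B *ᵥ w ∈ W)
    (h : ∀ w ∈ W, A *ᵥ (P *ᵥ w) = P *ᵥ (B *ᵥ w)) (hA : IsUnit (aeval A B.charpoly))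
    {w : n → R} (hw : w ∈ W) : P *ᵥ w = 0 := by
  have hCH := aeval_mulVec_mulVec_of_intertwines hW h B.charpoly hw
  rw [aeval_self_charpoly, zero_mulVec, mulVec_zero] at hCH
  exact mulVec_injective_of_isUnit hA (hCH.trans (mulVec_zero _).symm)

end Intertwining

section Spectrum

variable {m n : Type*} [Fintype m] [Fintype n] [DecidableEq m] [DecidableEq n]

theorem spectrum_transpose {R : Type*} [CommRing R] (M : Matrix n n R) :
    spectrum R Mᵀ = spectrum R M := by
  ext r
  simp only [mem_spectrum_iff_not_isUnit_eval_charpoly, charpoly_transpose]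

theorem isUnit_aeval_charpoly_of_disjoint {K : Type*} [Field K] [IsAlgClosed K]
    {A : Matrix m m K} {B : Matrix n n K} (h : Disjoint (spectrum K A) (spectrum K B)) :
    IsUnit (aeval A B.charpoly) := by
  nontriviality Matrix m m K
  rw [← spectrum.zero_notMem_iff K, spectrum.map_polynomial_aeval_of_nonempty _ _
    (spectrum.nonempty_of_isAlgClosed_of_finiteDimensional K A)]
  rintro ⟨μ, hμA, hμB⟩
  exact Set.disjoint_left.1 h hμA (mem_spectrum_iff_isRoot_charpoly.2 hμB)

theorem isUnit_aeval_charpoly_of_disjoint_map {K L : Type*} [Field K] [Field L]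
    [IsAlgClosed L] [Algebra K L] {A : Matrix m m K} {B : Matrix n n K}
    (h : Disjoint (spectrum L (A.map (algebraMap K L))) (spectrum L (B.map (algebraMap K L)))) :
    IsUnit (aeval A B.charpoly) := by
  have hL := isUnit_aeval_charpoly_of_disjoint h
  have hA : A.map (algebraMap K L) = (Algebra.ofId K L).mapMatrix A := rfl
  rw [charpoly_map, aeval_map_algebraMap, hA, aeval_algHom_apply, isUnit_iff_isUnit_det,
    ← AlgHom.map_det] at hL
  exact (isUnit_iff_isUnit_det _).2 hL.of_map

theorem isUnit_aeval_charpoly_neg_transpose {A : Matrix n n ℝ}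
    (hA : ∀ μ ∈ spectrum ℂ (A.map Complex.ofReal), μ.re < 0) :
    IsUnit (aeval A (-Aᵀ).charpoly) := by
  refine isUnit_aeval_charpoly_of_disjoint_map (L := ℂ) (Set.disjoint_left.2 fun μ hμ hμ' => ?_)
  have hneg : -μ ∈ spectrum ℂ (A.map Complex.ofReal) := by
    have hmap : (-Aᵀ).map (algebraMap ℝ ℂ) = -(A.map Complex.ofReal)ᵀ := by ext; simp
    rwa [hmap, ← spectrum.neg_eq, Set.mem_neg, spectrum_transpose] at hμ'
  linarith [hA μ hμ, hA (-μ) hneg, Complex.neg_re μ]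

end Spectrum

section Reachable

variable {R : Type*} [CommRing R] {m n : Type*} [Fintype m] [Fintype n] [DecidableEq n]

def reachableSubspace (A : Matrix n n R) (L : Matrix n m R) : Submodule R (n → R) :=
  ⨆ k : ℕ, LinearMap.range (A ^ k * L).mulVecLin

theorem pow_mul_mulVec_mem_iSup_fin [Nontrivial R] (A : Matrix n n R)
    (L : Matrix n m R) {N : ℕ} (hN : Fintype.card n ≤ N) (k : ℕ) (x : m → R) :
    (A ^ k * L) *ᵥ x ∈ ⨆ j : Fin N, LinearMap.range (A ^ (j : ℕ) * L).mulVecLin := by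
  rcases isEmpty_or_nonempty n with hn | hn
  · rw [Subsingleton.elim ((A ^ k * L) *ᵥ x) 0]
    exact zero_mem _
  have hχ : A.charpoly ≠ 1 := fun h =>
    Fintype.card_ne_zero (α := n) (by simpa [h] using A.charpoly_natDegree_eq_dim.symm)
  have hdeg : (X ^ k %ₘ A.charpoly).natDegree < N :=
    (natDegree_modByMonic_lt _ A.charpoly_monic hχ).trans_le
      (A.charpoly_natDegree_eq_dim ▸ hN)
  rw [← mulVec_mulVec, pow_eq_aeval_mod_charpoly, aeval_eq_sum_range' hdeg, sum_mulVec]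
  refine Submodule.sum_mem _ fun j hj => ?_
  rw [smul_mulVec, mulVec_mulVec]
  exact Submodule.smul_mem _ _
    (Submodule.mem_iSup_of_mem ⟨j, Finset.mem_range.1 hj⟩ ⟨x, rfl⟩)

theorem reachableSubspace_eq_iSup_fin [Nontrivial R] (A : Matrix n n R)
    (L : Matrix n m R) {N : ℕ} (hN : Fintype.card n ≤ N) :
    reachableSubspace A L = ⨆ k : Fin N, LinearMap.range (A ^ (k : ℕ) * L).mulVecLin := by
  refine le_antisymm (iSup_le fun k => ?_) (iSup_le fun k => ?_)
  · rintro _ ⟨x, rfl⟩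
    exact pow_mul_mulVec_mem_iSup_fin A L hN k x
  · exact le_iSup (fun k : ℕ => LinearMap.range (A ^ k * L).mulVecLin) k

end Reachable

section Lyapunov

variable {R : Type*} [CommRing R] {m n : Type*} [Fintype n]

theorem transpose_pow_succ_mul_mulVec [DecidableEq n] (A : Matrix n n R) (L : Matrix n m R)
    (k : ℕ) (x : n → R) : (A ^ (k + 1) * L)ᵀ *ᵥ x = (A ^ k * L)ᵀ *ᵥ (Aᵀ *ᵥ x) := by
  rw [pow_succ', Matrix.mul_assoc, transpose_mul, mulVec_mulVec]

variable [Fintype m] {A P : Matrix n n R} {L : Matrix n m R}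

theorem lyapunov_apply (hLyap : A * P + P * Aᵀ = -(L * Lᵀ)) (x : n → R) :
    A *ᵥ (P *ᵥ x) + P *ᵥ (Aᵀ *ᵥ x) = -(L *ᵥ (Lᵀ *ᵥ x)) := by
  simpa only [add_mulVec, neg_mulVec, mulVec_mulVec] using congrArg (· *ᵥ x) hLyap

theorem transpose_mulVec_eq_zero_of_lyapunov [LinearOrder R] [IsStrictOrderedRing R]
    (hP : P.IsSymm) (hLyap : A * P + P * Aᵀ = -(L * Lᵀ)) {x : n → R} (hx : P *ᵥ x = 0) :
    Lᵀ *ᵥ x = 0 := by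
  have hPA := lyapunov_apply hLyap x
  rw [hx, mulVec_zero, zero_add] at hPA
  have hquad : x ⬝ᵥ (P *ᵥ (Aᵀ *ᵥ x)) = 0 := by
    rw [dotProduct_mulVec, ← mulVec_transpose, hP.eq, hx, zero_dotProduct]
  rwa [hPA, dotProduct_neg, dotProduct_mulVec, ← mulVec_transpose, neg_eq_zero,
    dotProduct_self_eq_zero] at hquad

theorem mulVec_transpose_mulVec_eq_zero_of_lyapunov [LinearOrder R] [IsStrictOrderedRing R]
    (hP : P.IsSymm) (hLyap : A * P + P * Aᵀ = -(L * Lᵀ)) {x : n → R} (hx : P *ᵥ x = 0) :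
    P *ᵥ (Aᵀ *ᵥ x) = 0 := by
  have hPA := lyapunov_apply hLyap x
  rwa [hx, mulVec_zero, zero_add, transpose_mulVec_eq_zero_of_lyapunov hP hLyap hx,
    mulVec_zero, neg_zero] at hPA

theorem ker_le_ker_transpose_pow_mul_of_lyapunov [DecidableEq n] [LinearOrder R]
    [IsStrictOrderedRing R] (hP : P.IsSymm) (hLyap : A * P + P * Aᵀ = -(L * Lᵀ)) (k : ℕ) :
    LinearMap.ker P.mulVecLin ≤ LinearMap.ker (A ^ k * L)ᵀ.mulVecLin := by
  induction k with
  | zero =>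
    intro x hx
    simpa only [LinearMap.mem_ker, mulVecLin_apply, pow_zero, Matrix.one_mul] using
      transpose_mulVec_eq_zero_of_lyapunov hP hLyap hx
  | succ k ih =>
    intro x hx
    simpa only [LinearMap.mem_ker, mulVecLin_apply, transpose_pow_succ_mul_mulVec] using
      ih (mulVec_transpose_mulVec_eq_zero_of_lyapunov hP hLyap hx)

theorem iInf_ker_le_ker_of_lyapunov [DecidableEq n] (hLyap : A * P + P * Aᵀ = -(L * Lᵀ))
    (hA : IsUnit (aeval A (-Aᵀ).charpoly)) :
    ⨅ k : ℕ, LinearMap.ker (A ^ k * L)ᵀ.mulVecLin ≤ LinearMap.ker P.mulVecLin := by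
  intro x hx
  refine mulVec_eq_zero_of_intertwines (fun w hw => ?_) (fun w hw => ?_) hA hx
  · simp only [Submodule.mem_iInf, LinearMap.mem_ker, mulVecLin_apply] at hw ⊢
    intro k
    rw [neg_mulVec, mulVec_neg, ← transpose_pow_succ_mul_mulVec, hw, neg_zero]
  · have hLw : Lᵀ *ᵥ w = 0 := by
      simpa only [LinearMap.mem_ker, mulVecLin_apply, pow_zero, Matrix.one_mul] using
        (Submodule.mem_iInf _).1 hw 0
    have hAP := lyapunov_apply hLyap w
    rw [hLw, mulVec_zero, neg_zero, add_eq_zero_iff_eq_neg] at hAP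
    rw [hAP, neg_mulVec, mulVec_neg]

end Lyapunov

end Matrix

/-- If `A` is stable and `P` (symmetric positive semi-definite) solves the Lyapunov
equation `A P + P Aᵀ = −L Lᵀ`, then the range of `P` equals the range of the
reachability matrix `[L, AL, A²L, …, A^{d−1}L]` (formalized as the supremum of the
ranges of `A^k L`, `k = 0, …, d−1`); in particular `Ran(L) ⊆ Ran(P)`. -/
theorem lyapunov_solution_range
    {d s : ℕ} (A : Matrix (Fin d) (Fin d) ℝ) (L : Matrix (Fin d) (Fin s) ℝ)
    (P : Matrix (Fin d) (Fin d) ℝ)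
    (hstab : ∀ μ ∈ spectrum ℂ (A.map (Complex.ofReal)), μ.re < 0)
    (hP : P.PosSemidef) (hLyap : A * P + P * Aᵀ = -(L * Lᵀ)) :
    LinearMap.range L.mulVecLin ≤ LinearMap.range P.mulVecLin ∧
    LinearMap.range P.mulVecLin =
      ⨆ k : Fin d, LinearMap.range ((A ^ (k : ℕ) * L).mulVecLin) := by
  have hsymm : P.IsSymm := (conjTranspose_eq_transpose_of_trivial P).symm.trans hP.1
  have hker : LinearMap.ker P.mulVecLin = ⨅ k : ℕ, LinearMap.ker (A ^ k * L)ᵀ.mulVecLin :=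
    le_antisymm (le_iInf (ker_le_ker_transpose_pow_mul_of_lyapunov hsymm hLyap))
      (iInf_ker_le_ker_of_lyapunov hLyap (isUnit_aeval_charpoly_neg_transpose hstab))
  have hrange : LinearMap.range P.mulVecLin = reachableSubspace A L :=
    range_mulVecLin_eq_iSup_of_ker_eq_iInf hP.1
      (by simpa only [conjTranspose_eq_transpose_of_trivial])
  refine ⟨?_, hrange.trans (reachableSubspace_eq_iSup_fin A L (by simp))⟩
  rw [hrange]
  exact le_iSup_of_le 0 (by rw [pow_zero, Matrix.one_mul])
end

section
/- Stability inheritance under balanced truncation: suppose A P + P Aᵀ = −B Bᵀ with P symmetric positive definite, and W_r, V_r ∈ ℝ^{d×r} satisfy V_rᵀ W_r = I_r, V_rᵀ P V_r = Σ_r diagonal positive definite, and P V_r = W_r Σ_r. Then A_r = V_rᵀ A W_r satisfies A_r Σ_r + Σ_r A_rᵀ = −(V_rᵀ B)(V_rᵀ B)ᵀ ⪯ 0; in particular every eigenvalue of A_r has nonpositive real part. -/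
open Matrix

open scoped ComplexOrder

/-!
Since `P` is symmetric, `P V_r = W_r Σ_r` transposes to `Σ_r W_rᵀ = V_rᵀ P`, so compressing
the full Lyapunov equation by `V_rᵀ (·) V_r` gives the reduced one. For a left eigenvector `w` of
`A_r` with eigenvalue `μ`, pairing the reduced equation with `w` and `wᴴ` gives
`2 Re μ · w Σ_r wᴴ = -‖w V_rᵀ B‖² ≤ 0`, and `w Σ_r wᴴ > 0`.
-/

namespace Matrix

variable {n : Type*} [Fintype n]

theorem lyapunov_compress {k R : Type*} [Fintype k] [CommRing R] {A P : Matrix n n R}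
    {V W : Matrix n k R} {S : Matrix k k R} (hP : Pᵀ = P) (hS : Sᵀ = S) (hPV : P * V = W * S) :
    (Vᵀ * A * W) * S + S * (Vᵀ * A * W)ᵀ = Vᵀ * (A * P + P * Aᵀ) * V := by
  have hVP : S * Wᵀ = Vᵀ * P := by
    simpa only [transpose_mul, hP, hS] using (congrArg transpose hPV).symm
  calc (Vᵀ * A * W) * S + S * (Vᵀ * A * W)ᵀ
      = Vᵀ * A * (W * S) + (S * Wᵀ) * Aᵀ * V := by
        simp only [transpose_mul, transpose_transpose, Matrix.mul_assoc]
    _ = Vᵀ * (A * P + P * Aᵀ) * V := by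
        rw [← hPV, hVP]
        simp only [Matrix.mul_add, Matrix.add_mul, Matrix.mul_assoc]

theorem exists_ne_zero_vecMul_eq_smul_of_mem_spectrum [DecidableEq n] {K : Type*} [Field K]
    {M : Matrix n n K} {μ : K} (hμ : μ ∈ spectrum K M) :
    ∃ w : n → K, w ≠ 0 ∧ w ᵥ* M = μ • w := by
  rw [spectrum.mem_iff, isUnit_iff_isUnit_det, isUnit_iff_ne_zero, not_not,
    ← exists_vecMul_eq_zero_iff] at hμ
  obtain ⟨w, hw0, hw⟩ := hμ
  refine ⟨w, hw0, ?_⟩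
  rwa [vecMul_sub, Algebra.algebraMap_eq_smul_one, vecMul_smul, vecMul_one, sub_eq_zero,
    eq_comm] at hw

theorem re_nonpos_of_lyapunov_of_vecMul_eq_smul {M S Q : Matrix n n ℂ} (hS : S.PosDef)
    (hQ : Q.PosSemidef) (h : M * S + S * Mᴴ = -Q) {μ : ℂ} {w : n → ℂ} (hw0 : w ≠ 0)
    (hw : w ᵥ* M = μ • w) : μ.re ≤ 0 := by
  have hc := hS.dotProduct_mulVec_pos (star_ne_zero.mpr hw0)
  have hq := hQ.dotProduct_mulVec_nonneg (star w)
  rw [star_star, Complex.pos_iff] at hc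
  rw [star_star, Complex.nonneg_iff] at hq
  have key : (2 * μ.re : ℂ) * (w ⬝ᵥ S *ᵥ star w) = -(w ⬝ᵥ Q *ᵥ star w) := calc
    _ = μ * (w ⬝ᵥ S *ᵥ star w) + star μ * (w ⬝ᵥ S *ᵥ star w) := by
      rw [← add_mul, Complex.star_def, Complex.add_conj, Complex.ofReal_mul, Complex.ofReal_ofNat]
    _ = (w ᵥ* M) ⬝ᵥ S *ᵥ star w + w ⬝ᵥ S *ᵥ star (w ᵥ* M) := by
      rw [hw, star_smul, mulVec_smul, dotProduct_smul, smul_dotProduct, smul_eq_mul, smul_eq_mul]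
    _ = w ⬝ᵥ (M * S + S * Mᴴ) *ᵥ star w := by
      rw [add_mulVec, dotProduct_add, ← mulVec_mulVec, ← mulVec_mulVec, dotProduct_mulVec w M,
        star_vecMul]
    _ = -(w ⬝ᵥ Q *ᵥ star w) := by rw [h, neg_mulVec, dotProduct_neg]
  have hre : 2 * μ.re * (w ⬝ᵥ S *ᵥ star w).re = -(w ⬝ᵥ Q *ᵥ star w).re := by
    simpa [← hc.2] using congrArg Complex.re key
  nlinarith [hc.1, hq.1]

theorem re_nonpos_of_lyapunov [DecidableEq n] {M S Q : Matrix n n ℂ} (hS : S.PosDef)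
    (hQ : Q.PosSemidef) (h : M * S + S * Mᴴ = -Q) {μ : ℂ} (hμ : μ ∈ spectrum ℂ M) :
    μ.re ≤ 0 :=
  let ⟨_, hw0, hw⟩ := exists_ne_zero_vecMul_eq_smul_of_mem_spectrum hμ
  re_nonpos_of_lyapunov_of_vecMul_eq_smul hS hQ h hw0 hw

theorem re_nonpos_of_lyapunov_diagonal [DecidableEq n] {m : Type*} [Fintype m]
    {M : Matrix n n ℝ} {σ : n → ℝ} (hσ : ∀ i, 0 < σ i) {X : Matrix n m ℝ}
    (h : M * diagonal σ + diagonal σ * Mᵀ = -(X * Xᵀ)) {μ : ℂ}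
    (hμ : μ ∈ spectrum ℂ (M.map Complex.ofReal)) : μ.re ≤ 0 := by
  refine re_nonpos_of_lyapunov (S := diagonal fun i ↦ (σ i : ℂ))
    (posDef_diagonal_iff.mpr fun i ↦ by exact_mod_cast hσ i)
    (posSemidef_self_mul_conjTranspose (X.map Complex.ofReal)) ?_ hμ
  have hconj : Function.Semiconj Complex.ofReal star star := fun x ↦ by simp
  rw [← diagonal_map Complex.ofReal_zero, ← conjTranspose_map _ hconj,
    ← conjTranspose_map _ hconj]
  have hmap := congrArg (·.map Complex.ofRealHom) h
  simp only [Matrix.map_add _ (map_add Complex.ofRealHom),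
    Matrix.map_neg _ (map_neg Complex.ofRealHom), Matrix.map_mul] at hmap
  exact hmap

end Matrix

theorem balanced_truncation_stability_general
    {d r m : ℕ} (A : Matrix (Fin d) (Fin d) ℝ) (B : Matrix (Fin d) (Fin m) ℝ)
    (P : Matrix (Fin d) (Fin d) ℝ) (Wr Vr : Matrix (Fin d) (Fin r) ℝ)
    (σ : Fin r → ℝ)
    (hP : P.PosDef) (hLyap : A * P + P * Aᵀ = -(B * Bᵀ))
    (hσ : ∀ i, 0 < σ i)
    (hPV : P * Vr = Wr * Matrix.diagonal σ) :
    (Vrᵀ * A * Wr) * Matrix.diagonal σ + Matrix.diagonal σ * (Vrᵀ * A * Wr)ᵀ =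
      -((Vrᵀ * B) * (Vrᵀ * B)ᵀ) ∧
    ((Vrᵀ * B) * (Vrᵀ * B)ᵀ).PosSemidef ∧
    (∀ μ ∈ spectrum ℂ ((Vrᵀ * A * Wr).map (Complex.ofReal)), μ.re ≤ 0) := by
  have hreduced : (Vrᵀ * A * Wr) * diagonal σ + diagonal σ * (Vrᵀ * A * Wr)ᵀ =
      -((Vrᵀ * B) * (Vrᵀ * B)ᵀ) := by
    rw [lyapunov_compress ((conjTranspose_eq_transpose_of_trivial P).symm.trans hP.1)
      (diagonal_transpose σ) hPV, hLyap]
    simp only [transpose_mul, transpose_transpose, Matrix.mul_neg, Matrix.neg_mul, Matrix.mul_assoc]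
  refine ⟨hreduced, ?_, fun μ ↦ re_nonpos_of_lyapunov_diagonal hσ hreduced⟩
  simpa using posSemidef_self_mul_conjTranspose (Vrᵀ * B)

/-- Stability inheritance under balanced truncation: suppose `A P + P Aᵀ = −B Bᵀ` with
`P` symmetric positive definite, and `W_r, V_r ∈ ℝ^{d×r}` satisfy `V_rᵀ W_r = I_r`,
`V_rᵀ P V_r = Σ_r` (diagonal with positive diagonal entries) and `P V_r = W_r Σ_r`.
Then `A_r = V_rᵀ A W_r` satisfies the reduced Lyapunov equation
`A_r Σ_r + Σ_r A_rᵀ = −(V_rᵀ B)(V_rᵀ B)ᵀ ⪯ 0`; in particular every eigenvalue of `A_r`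
has nonpositive real part. -/
theorem balanced_truncation_stability
    {d r m : ℕ} (A : Matrix (Fin d) (Fin d) ℝ) (B : Matrix (Fin d) (Fin m) ℝ)
    (P : Matrix (Fin d) (Fin d) ℝ) (Wr Vr : Matrix (Fin d) (Fin r) ℝ)
    (σ : Fin r → ℝ)
    (hP : P.PosDef) (hLyap : A * P + P * Aᵀ = -(B * Bᵀ))
    (hVW : Vrᵀ * Wr = 1) (hσ : ∀ i, 0 < σ i)
    (hbal : Vrᵀ * P * Vr = Matrix.diagonal σ)
    (hPV : P * Vr = Wr * Matrix.diagonal σ) :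
    (Vrᵀ * A * Wr) * Matrix.diagonal σ + Matrix.diagonal σ * (Vrᵀ * A * Wr)ᵀ =
      -((Vrᵀ * B) * (Vrᵀ * B)ᵀ) ∧
    ((Vrᵀ * B) * (Vrᵀ * B)ᵀ).PosSemidef ∧
    (∀ μ ∈ spectrum ℂ ((Vrᵀ * A * Wr).map (Complex.ofReal)), μ.re ≤ 0) :=
  balanced_truncation_stability_general A B P Wr Vr σ hP hLyap hσ hPV
end
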